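/- Let L be a left Leibniz algebra and M an irreducible L-bimodule. Then M is symmetric with non-trivial L-action if and only if M^L = 0. -/
import Mathlib


/-- A left Leibniz algebra over `F`: every left multiplication operator is a derivation. -/
structure LeibnizAlg (F : Type*) [Field F] (L : Type*) [AddCommGroup L] [Module F L] where
  mul : L →ₗ[F] L →ₗ[F] L
  leibniz : ∀ x y z : L, mul x (mul y z) = mul (mul x y) z + mul y (mul x z)

variable {F : Type*} [Field F] {L : Type*} [AddCommGroup L] [Module F L]

/-- The Leibniz kernel: the span of all squares. -/
def LeibKer (A : LeibnizAlg F L) : Submodule F L :=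
  Submodule.span F {m : L | ∃ x : L, m = A.mul x x}

/-- A Leibniz bimodule over a left Leibniz algebra. -/
structure LeibnizBimodule (A : LeibnizAlg F L) (M : Type*) [AddCommGroup M] [Module F M] where
  lact : L →ₗ[F] M →ₗ[F] M
  ract : M →ₗ[F] L →ₗ[F] M
  leib_act : ∀ (x y : L) (m : M), lact (A.mul x y) m = lact x (lact y m) - lact y (lact x m)
  lml : ∀ (x : L) (m : M) (y : L), ract (lact x m) y = lact x (ract m y) - ract m (A.mul x y)
  mll : ∀ (m : M) (x y : L), ract (ract m x) y = ract m (A.mul x y) - lact x (ract m y)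

/-- A submodule closed under both actions. -/
def IsSubBimodule {M : Type*} [AddCommGroup M] [Module F M] (A : LeibnizAlg F L)
    (B : LeibnizBimodule A M) (N : Submodule F M) : Prop :=
  ∀ x : L, ∀ m ∈ N, B.lact x m ∈ N ∧ B.ract m x ∈ N

/-- An irreducible bimodule is symmetric with non-trivial action iff `M^L = 0`. -/
theorem irreducible_symmetric_iff_no_right_invariants {M : Type*} [AddCommGroup M]
    [Module F M] (A : LeibnizAlg F L) (B : LeibnizBimodule A M)
    (hNe : ∃ m : M, m ≠ 0)
    (hIrr : ∀ N : Submodule F M, IsSubBimodule A B N → N = ⊥ ∨ N = ⊤) :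
    ((∀ (x : L) (m : M), B.ract m x = - B.lact x m) ∧
        ¬(∀ (x : L) (m : M), B.lact x m = 0 ∧ B.ract m x = 0)) ↔
      (∀ m : M, (∀ x : L, B.ract m x = 0) → m = 0) := by

  classical
  set V : Submodule F M :=
    { carrier := {m | ∀ x : L, B.ract m x = 0}
      add_mem' := fun {a b} ha hb x => by simp [ha x, hb x]
      zero_mem' := fun x => by simp
      smul_mem' := fun c a ha x => by simp [ha x] } with hV
  have hVmem : ∀ m : M, m ∈ V ↔ ∀ x : L, B.ract m x = 0 := fun m => Iff.rfl
  have hVsub : IsSubBimodule A B V := by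
    intro x m hm
    constructor
    · intro y
      have h1 := B.lml x m y
      rw [hm y, hm (A.mul x y)] at h1
      simpa using h1
    · intro y
      rw [hm x]
      simp
  constructor
  · rintro ⟨hsym, hnt⟩ m hm
    rcases hIrr V hVsub with h | h
    · have : m ∈ V := hm
      rw [h] at this
      simpa using this
    · exfalso
      apply hnt
      intro x n
      have hn : n ∈ V := h ▸ Submodule.mem_top
      have h1 : B.ract n x = 0 := hn x
      have h2 : B.lact x n = 0 := by
        have := hsym x n
        rw [h1] at this
        exact neg_eq_zero.mp this.symm
      exact ⟨h2, h1⟩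
  · intro h0
    have hsym : ∀ (x : L) (m : M), B.ract m x = - B.lact x m := by
      intro x m
      have key : ∀ y : L, B.ract (B.lact x m + B.ract m x) y = 0 := by
        intro y
        rw [map_add, LinearMap.add_apply, B.lml x m y, B.mll m x y]
        abel
      have hz := h0 _ key
      exact eq_neg_of_add_eq_zero_right hz
    refine ⟨hsym, fun htriv => ?_⟩
    obtain ⟨m, hm⟩ := hNe
    exact hm (h0 m fun x => (htriv x m).2)
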